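/- Define c_m = (1/m)·∫_0^1 (u − 1/2)·u·∏_{k=1}^{m−1}(k − u) du for integers m ≥ 1. Then c_1 = 1/12, c_2 = 0, and c_m < 0 for all m > 2. -/

import Mathlib

/-!
Factor the integrand as `(u - 1/2) u (1 - u) Q(u)` with `Q(u) = ∏_{k=2}^{m-1} (k - u)`, which is
strictly decreasing on `[0, 1]` once `m > 2`. Pairing `u` with `1 - u` turns the integral into half
of `∫ (u - 1/2) u (1 - u) (Q(u) - Q(1 - u))`, whose integrand is `≤ 0` and negative at `u = 1/4`.
For `m = 2` the same pairing shows the integrand is odd about `1/2`, and `m = 1` is a direct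
computation.
-/

noncomputable def binetC (m : ℕ) : ℝ :=
  (1 / (m : ℝ)) * ∫ u in (0:ℝ)..1, (u - 1/2) * u * ∏ k ∈ Finset.Icc 1 (m - 1), ((k : ℝ) - u)

open MeasureTheory Set

theorem strictAntiOn_prod_sub {ι : Type*} {s : Finset ι} (hs : s.Nonempty) {c : ι → ℝ} {a : ℝ}
    (hc : ∀ i ∈ s, a < c i) : StrictAntiOn (fun v => ∏ i ∈ s, (c i - v)) (Iic a) :=
  fun _ _ y hy hxy => Finset.prod_lt_prod_of_nonempty
    (fun i hi => by linarith [hc i hi, mem_Iic.1 hy]) (fun _ _ => by linarith) hs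

theorem prod_Icc_one_sub_eq_mul (n : ℕ) (hn : 1 ≤ n) (u : ℝ) :
    ∏ k ∈ Finset.Icc 1 n, ((k : ℝ) - u) = (1 - u) * ∏ k ∈ Finset.Icc 2 n, ((k : ℝ) - u) := by
  rw [Finset.Icc_eq_cons_Ioc hn, Finset.prod_cons, ← Finset.Icc_add_one_left_eq_Ioc, Nat.cast_one]
  rfl

theorem integral_add_comp_one_sub {f : ℝ → ℝ} (hf : IntervalIntegrable f volume 0 1) :
    ∫ u in (0:ℝ)..1, (f u + f (1 - u)) = 2 * ∫ u in (0:ℝ)..1, f u := by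
  have hreflect : ∫ u in (0:ℝ)..1, f (1 - u) = ∫ u in (0:ℝ)..1, f u := by
    simp [intervalIntegral.integral_comp_sub_left f (1 : ℝ) (a := 0) (b := 1)]
  rw [intervalIntegral.integral_add hf (by simpa using (hf.comp_sub_left 1).symm), hreflect, two_mul]

theorem integral_sub_half_mul_neg_of_strictAntiOn {g : ℝ → ℝ} (hc : ContinuousOn g (Icc 0 1))
    (hg : StrictAntiOn g (Icc 0 1)) :
    ∫ u in (0:ℝ)..1, (u - 1/2) * u * (1 - u) * g u < 0 := by
  set F : ℝ → ℝ := fun u => (u - 1/2) * u * (1 - u) * g u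
  have hF : ContinuousOn F (Icc 0 1) := by fun_prop
  have hsymm : ∀ u, F u + F (1 - u) = (u - 1/2) * (u * (1 - u)) * (g u - g (1 - u)) := by
    intro u; simp only [F]; ring
  have hreflect : MapsTo (fun u : ℝ => 1 - u) (Icc 0 1) (Icc 0 1) :=
    fun u hu => ⟨by linarith [hu.2], by linarith [hu.1]⟩
  have hpair : ∀ u ∈ Icc (0:ℝ) 1, (u - 1/2) * (g u - g (1 - u)) ≤ 0 := by
    intro u hu
    rcases le_total u (1/2) with hle | hge
    · exact mul_nonpos_of_nonpos_of_nonneg (by linarith)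
        (sub_nonneg.2 (hg.antitoneOn hu (hreflect hu) (by linarith)))
    · exact mul_nonpos_of_nonneg_of_nonpos (by linarith)
        (sub_nonpos.2 (hg.antitoneOn (hreflect hu) hu (by linarith)))
  suffices ∫ u in (0:ℝ)..1, (F u + F (1 - u)) < ∫ _ in (0:ℝ)..1, (0:ℝ) by
    rw [integral_add_comp_one_sub (hF.intervalIntegrable_of_Icc zero_le_one),
      intervalIntegral.integral_zero] at this
    linarith
  refine intervalIntegral.integral_lt_integral_of_continuousOn_of_le_of_exists_lt one_pos
    (hF.add (hF.comp (by fun_prop) hreflect)) continuousOn_const (fun u hu => ?_)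
    ⟨1/4, by norm_num, ?_⟩
  · rw [hsymm, mul_right_comm]
    exact mul_nonpos_of_nonpos_of_nonneg (hpair u (Ioc_subset_Icc_self hu))
      (mul_nonneg hu.1.le (by linarith [hu.2]))
  · have : g (1 - 1/4) < g (1/4) := hg (by norm_num) (by norm_num) (by norm_num)
    rw [hsymm]
    nlinarith

theorem integral_sub_half_mul_one_sub : ∫ u in (0:ℝ)..1, (u - 1/2) * u * (1 - u) = 0 := by
  have h := integral_add_comp_one_sub (f := fun u : ℝ => (u - 1/2) * u * (1 - u))
    (Continuous.intervalIntegrable (by fun_prop) _ _)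
  have hzero : ∀ u : ℝ, (u - 1/2) * u * (1 - u) + (1 - u - 1/2) * (1 - u) * (1 - (1 - u)) = 0 :=
    fun u => by ring
  simp only [hzero, intervalIntegral.integral_zero] at h
  linarith

theorem integral_sub_half_mul_self : ∫ u in (0:ℝ)..1, (u - 1/2) * u = 1/12 := by
  simp_rw [sub_mul]
  rw [intervalIntegral.integral_sub (Continuous.intervalIntegrable (by fun_prop) _ _)
    (Continuous.intervalIntegrable (by fun_prop) _ _), intervalIntegral.integral_const_mul]
  norm_num [← pow_two, integral_id]

theorem binetC_values_and_neg :
    binetC 1 = 1/12 ∧ binetC 2 = 0 ∧ ∀ m : ℕ, 2 < m → binetC m < 0 := by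
  refine ⟨?_, ?_, fun m hm => ?_⟩
  · simp only [binetC, Nat.sub_self, Finset.Icc_eq_empty_of_lt zero_lt_one, Finset.prod_empty,
      mul_one, integral_sub_half_mul_self]
    norm_num
  · simp only [binetC, show 2 - 1 = 1 from rfl, Finset.prod_singleton, Finset.Icc_self,
      Nat.cast_one, integral_sub_half_mul_one_sub, mul_zero]
  · have hQ : StrictAntiOn (fun v => ∏ k ∈ Finset.Icc 2 (m - 1), ((k : ℝ) - v)) (Icc 0 1) :=
      (strictAntiOn_prod_sub (Finset.nonempty_Icc.2 (by omega)) fun k hk => by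
        have : (2:ℝ) ≤ k := by exact_mod_cast (Finset.mem_Icc.1 hk).1
        linarith).mono Icc_subset_Iic_self
    have hintegral : ∫ u in (0:ℝ)..1, (u - 1/2) * u * ∏ k ∈ Finset.Icc 1 (m - 1), ((k : ℝ) - u) < 0 := by
      simpa only [prod_Icc_one_sub_eq_mul (m - 1) (by omega), mul_assoc]
        using integral_sub_half_mul_neg_of_strictAntiOn (by fun_prop) hQ
    exact mul_neg_of_pos_of_neg (by positivity) hintegral
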